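/- Let $p_1, \ldots, p_J$ be distinct primes congruent to $1$ modulo $4$, with associated angles $\theta_{p_j}$ as defined, and let $c_1, \ldots, c_J$ be integers, not all zero. Writing $\theta = \sum_{j=1}^J c_j \theta_{p_j}$, one has the repulsion estimate $|e^{i\theta} - 1| \ge (p_1^{|c_1|} \cdots p_J^{|c_J|})^{-1/2}$. -/

import Mathlib

/-!
With `π_j = a_j + b_j i` one has `e^{iθ_j} = π_j / √p_j`, so `e^{iθ} √N`, where
`N = ∏ p_j^{|c_j|}`, is the Gaussian integer `Z = ∏ π_j^{c_j}` with `π_j⁻¹` replaced by `conj π_j`.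
`Z` is not real: if `c_{j₀} ≠ 0`, the Gaussian prime `π_{j₀}` (or its conjugate) divides `Z`, but it
divides no `π_j, conj π_j` with `j ≠ j₀` (the norms are distinct primes) and not its own conjugate
(for odd `p`, `π` and `conj π` are not associate), hence not `conj Z`. So `|Im Z| ≥ 1`, that is
`|sin θ| ≥ N^{-1/2}`, and `|e^{iθ} - 1| ≥ |sin θ|`.
-/

open Complex
open scoped ComplexConjugate

section StarIfNeg

variable {R : Type*} [Star R]

/-- `starIfNeg z c ^ c.natAbs` is `z ^ c` with `z⁻¹` replaced by `star z`; it stays integral. -/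
def starIfNeg (z : R) (c : ℤ) : R := if 0 ≤ c then z else star z

lemma starIfNeg_eq_or (z : R) (c : ℤ) : starIfNeg z c = z ∨ starIfNeg z c = star z := by
  unfold starIfNeg; split_ifs <;> simp

end StarIfNeg

theorem Complex.exp_int_mul_arg_mul_norm_pow (z : ℂ) (c : ℤ) :
    exp (I * (c * arg z)) * (‖z‖ : ℂ) ^ c.natAbs = starIfNeg z c ^ c.natAbs := by
  set u := exp (arg z * I)
  have hpolar : (‖z‖ : ℂ) * u = z := norm_mul_exp_arg_mul_I z
  have hexp : exp (I * (c * arg z)) = u ^ c := by rw [← exp_int_mul]; ring_nf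
  have hconj : conj u = u⁻¹ := by rw [← exp_conj, ← exp_neg]; simp
  unfold starIfNeg
  split_ifs with hc
  · lift c to ℕ using hc
    rw [hexp, zpow_natCast, Int.natAbs_natCast, ← mul_pow, mul_comm, hpolar]
  · obtain ⟨n, rfl⟩ : ∃ n : ℕ, c = -n := ⟨c.natAbs, by omega⟩
    rw [hexp, zpow_neg, zpow_natCast, ← inv_pow, ← hconj, Int.natAbs_neg, Int.natAbs_natCast,
      ← mul_pow, ← hpolar, star_mul', ← Complex.conj_ofReal ‖z‖]
    simp [u, mul_comm]

namespace Zsqrtd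

variable {d : ℤ}

instance isLocalHom_normMonoidHom : IsLocalHom (normMonoidHom (d := d)) :=
  ⟨fun z h => (isUnit_iff_norm_isUnit z).2 h⟩

theorem irreducible_of_prime_norm {z : ℤ√d} (h : Prime z.norm) : Irreducible z :=
  Irreducible.of_map (f := normMonoidHom) h.irreducible

theorem norm_dvd_norm {x y : ℤ√d} (h : x ∣ y) : x.norm ∣ y.norm :=
  map_dvd normMonoidHom h

@[simp]
theorem norm_starIfNeg (z : ℤ√d) (c : ℤ) : (starIfNeg z c).norm = z.norm := by
  rcases starIfNeg_eq_or z c with h | h <;> rw [h]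
  exact norm_conj z

end Zsqrtd

namespace GaussianInt

theorem toComplex_starIfNeg (z : GaussianInt) (c : ℤ) :
    ((starIfNeg z c : GaussianInt) : ℂ) = starIfNeg (z : ℂ) c := by
  unfold starIfNeg; split_ifs <;> simp [toComplex_star]

theorem prime_of_norm_eq_prime {z : GaussianInt} {q : ℕ} (hq : q.Prime) (h : z.norm = q) :
    Prime z :=
  (Zsqrtd.irreducible_of_prime_norm (h ▸ Nat.prime_iff_prime_int.1 hq)).prime

theorem not_dvd_star_of_norm_eq_prime {z : GaussianInt} {q : ℕ} (hq : q.Prime) (hq2 : q ≠ 2)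
    (h : z.norm = q) : ¬ z ∣ star z := by
  -- `z ∣ conj z` gives `z ∣ z ± conj z`, whose norms are `4 re² z` and `4 im² z`;
  -- so `q ∣ re z`, `q ∣ im z` and `q² ∣ N z = q`.
  intro hdvd
  have hq' : Prime (q : ℤ) := Nat.prime_iff_prime_int.1 hq
  have hq_two : ¬ (q : ℤ) ∣ 2 := fun h2 => by
    have := Int.le_of_dvd two_pos h2; have := hq.two_le; omega
  have of_dvd_sq : ∀ (w : GaussianInt) (n : ℤ), z ∣ w → w.norm = (2 * n) ^ 2 → (q : ℤ) ∣ n := by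
    intro w n hw hwn
    have := Zsqrtd.norm_dvd_norm hw
    rw [h, hwn] at this
    exact (hq'.dvd_or_dvd (hq'.dvd_of_dvd_pow this)).resolve_left hq_two
  have hre : (q : ℤ) ∣ z.re :=
    of_dvd_sq (z + star z) _ (dvd_add dvd_rfl hdvd) <| by
      simp only [Zsqrtd.norm_def, Zsqrtd.re_add, Zsqrtd.im_add, Zsqrtd.re_star, Zsqrtd.im_star]
      ring
  have him : (q : ℤ) ∣ z.im :=
    of_dvd_sq (z - star z) _ (dvd_sub dvd_rfl hdvd) <| by
      simp only [Zsqrtd.norm_def, Zsqrtd.re_sub, Zsqrtd.im_sub, Zsqrtd.re_star, Zsqrtd.im_star]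
      ring
  have hsq : (q : ℤ) * q ∣ z.norm := by
    rw [Zsqrtd.norm_def, mul_assoc (-1)]
    exact dvd_sub (mul_dvd_mul hre hre) (dvd_mul_of_dvd_right (mul_dvd_mul him him) _)
  rw [h] at hsq
  exact hq'.not_isUnit <|
    isUnit_of_dvd_one ((mul_dvd_mul_iff_left hq'.ne_zero).1 (by simpa using hsq))

theorem star_prod_starIfNeg_pow_ne {ι : Type*} [Fintype ι] (π : ι → GaussianInt) (p : ι → ℕ)
    (hp : ∀ j, (p j).Prime) (hp2 : ∀ j, p j ≠ 2) (hinj : Function.Injective p)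
    (hnorm : ∀ j, (π j).norm = p j) (c : ι → ℤ) (hc : ∃ j, c j ≠ 0) :
    star (∏ j, starIfNeg (π j) (c j) ^ (c j).natAbs) ≠
      ∏ j, starIfNeg (π j) (c j) ^ (c j).natAbs := by
  intro hstar
  obtain ⟨j₀, hj₀⟩ := hc
  set σ := starIfNeg (π j₀) (c j₀)
  have hσnorm : σ.norm = p j₀ := (Zsqrtd.norm_starIfNeg _ _).trans (hnorm j₀)
  have hσ : Prime σ := prime_of_norm_eq_prime (hp j₀) hσnorm
  have hσZ : σ ∣ ∏ j, starIfNeg (π j) (c j) ^ (c j).natAbs :=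
    (dvd_pow_self σ (Int.natAbs_ne_zero.2 hj₀)).trans
      (Finset.dvd_prod_of_mem _ (Finset.mem_univ j₀))
  rw [← hstar, star_prod] at hσZ
  obtain ⟨j, -, hj⟩ := hσ.exists_mem_finset_dvd hσZ
  replace hj := hσ.dvd_of_dvd_pow (star_pow (starIfNeg (π j) (c j)) _ ▸ hj)
  obtain rfl : j₀ = j := by
    have := Zsqrtd.norm_dvd_norm hj
    simp only [Zsqrtd.norm_conj, Zsqrtd.norm_starIfNeg, hσnorm, hnorm] at this
    exact hinj ((Nat.prime_dvd_prime_iff_eq (hp j₀) (hp j)).1 (Int.natCast_dvd_natCast.1 this))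
  exact not_dvd_star_of_norm_eq_prime (hp j₀) (hp2 j₀) hσnorm hj

theorem one_div_le_norm_sub_one {Z : GaussianInt} (hZ : star Z ≠ Z) {w : ℂ} {S : ℝ} (hS : 0 < S)
    (h : (Z : ℂ) = w * S) : 1 / S ≤ ‖w - 1‖ := by
  have him : Z.im ≠ 0 := fun h0 => hZ (Zsqrtd.ext rfl (by simp [h0]))
  have hwim : (Z.im : ℝ) = w.im * S := by rw [intCast_im, h]; simp
  calc 1 / S ≤ |w.im| := by
        rw [div_le_iff₀ hS, ← abs_of_pos hS, ← abs_mul, ← hwim]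
        exact_mod_cast Int.one_le_abs him
    _ ≤ ‖w - 1‖ := by simpa using abs_im_le_norm (w - 1)

end GaussianInt

theorem angle_repulsion_general (J : ℕ) (p : Fin J → ℕ)
    (hp : ∀ j, Nat.Prime (p j)) (hmod : ∀ j, p j % 4 = 1)
    (hinj : Function.Injective p)
    (a b : Fin J → ℤ) (hab : ∀ j, (a j) ^ 2 + (b j) ^ 2 = (p j : ℤ))
    (θ : Fin J → ℝ)
    (hθ : ∀ j, θ j = Complex.arg ((a j : ℂ) + (b j : ℂ) * Complex.I))
    (c : Fin J → ℤ) (hc : ∃ j, c j ≠ 0) :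
    1 / Real.sqrt (∏ j, (p j : ℝ) ^ (c j).natAbs) ≤
      ‖Complex.exp (Complex.I * (∑ j, (c j : ℂ) * (θ j : ℂ))) - 1‖ := by
  set π : Fin J → GaussianInt := fun j => ⟨a j, b j⟩
  have hnorm : ∀ j, (π j).norm = p j := fun j => by rw [← hab j, Zsqrtd.norm_def]; ring
  have hθπ : ∀ j, θ j = arg (π j) := fun j => by rw [hθ, GaussianInt.toComplex_def']
  have hsqrt : √(∏ j, (p j : ℝ) ^ (c j).natAbs) = ∏ j, ‖(π j : ℂ)‖ ^ (c j).natAbs := by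
    rw [Real.sqrt_eq_iff_eq_sq (by positivity) (by positivity), ← Finset.prod_pow]
    refine Finset.prod_congr rfl fun j _ => ?_
    rw [← pow_mul, mul_comm, pow_mul, Complex.sq_norm, ← GaussianInt.intCast_real_norm, hnorm]
    norm_cast
  have hpos : 0 < √(∏ j, (p j : ℝ) ^ (c j).natAbs) :=
    Real.sqrt_pos.2 (Finset.prod_pos fun j _ => pow_pos (by exact_mod_cast (hp j).pos) _)
  have hp2 : ∀ j, p j ≠ 2 := fun j h2 => by simpa [h2] using hmod j
  refine GaussianInt.one_div_le_norm_sub_one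
    (GaussianInt.star_prod_starIfNeg_pow_ne π p hp hp2 hinj hnorm c hc) hpos ?_
  rw [hsqrt]
  push_cast
  simp only [map_prod, map_pow, GaussianInt.toComplex_starIfNeg, Finset.mul_sum, exp_sum,
    ← Finset.prod_mul_distrib, hθπ, ← exp_int_mul_arg_mul_norm_pow]

/-- Repulsion of angles of Gaussian primes: for distinct primes `p_j ≡ 1 (mod 4)` with
associated angles `θ_{p_j}`, and integers `c_j` not all zero, writing
`θ = ∑ c_j θ_{p_j}` one has `|e^{iθ} - 1| ≥ (p₁^{|c₁|} ⋯ p_J^{|c_J|})^{-1/2}`. -/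
theorem angle_repulsion (J : ℕ) (p : Fin J → ℕ)
    (hp : ∀ j, Nat.Prime (p j)) (hmod : ∀ j, p j % 4 = 1)
    (hinj : Function.Injective p)
    (a b : Fin J → ℤ) (hab : ∀ j, (a j) ^ 2 + (b j) ^ 2 = (p j : ℤ))
    (θ : Fin J → ℝ)
    (hθ : ∀ j, θ j = Complex.arg ((a j : ℂ) + (b j : ℂ) * Complex.I))
    (hθpos : ∀ j, 0 < θ j) (hθlt : ∀ j, θ j < Real.pi / 4)
    (c : Fin J → ℤ) (hc : ∃ j, c j ≠ 0) :
    1 / Real.sqrt (∏ j, (p j : ℝ) ^ (c j).natAbs) ≤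
      ‖Complex.exp (Complex.I * (∑ j, (c j : ℂ) * (θ j : ℂ))) - 1‖ :=
  angle_repulsion_general J p hp hmod hinj a b hab θ hθ c hc
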